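/- arXiv:1910.02327 — 5 statements merged into one kernel-verified Lean document; each statement's English description precedes it below -/
import Mathlib

section
/- There is no configuration of four points p₀, p₁, p₂, p₃ in the Euclidean plane and real number r > 0 such that: for all i ≠ j in {1,2,3}, ‖pᵢ - pⱼ‖ ≥ 2r; for all i in {1,2,3}, ‖pᵢ - p₀‖ ≤ (2/√3)·r; and at least one of these six inequalities is strict. -/
section aux

variable {E : Type*} [NormedAddCommGroup E] [InnerProductSpace ℝ E]

lemma three_disk_key (a b c : E) :
    ‖a - b‖ ^ 2 + ‖b - c‖ ^ 2 + ‖a - c‖ ^ 2 + ‖a + b + c‖ ^ 2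
      = 3 * (‖a‖ ^ 2 + ‖b‖ ^ 2 + ‖c‖ ^ 2) := by
  have h1 := @norm_sub_sq_real E _ _ a b
  have h2 := @norm_sub_sq_real E _ _ b c
  have h3 := @norm_sub_sq_real E _ _ a c
  have h4 := @norm_add_sq_real E _ _ (a + b) c
  have h5 := @norm_add_sq_real E _ _ a b
  have h6 : (inner ℝ (a + b) c : ℝ) = inner ℝ a c + inner ℝ b c := inner_add_left a b c
  rw [h6] at h4
  nlinarith [h1, h2, h3, h4, h5]

end aux

set_option maxHeartbeats 1600000 in
/-- There is no configuration of four points `p 0, p 1, p 2, p 3` in the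
Euclidean plane and real `r > 0` with `‖p i - p j‖ ≥ 2r` for distinct `i, j ∈ {1,2,3}`,
`‖p i - p 0‖ ≤ (2/√3)·r` for `i ∈ {1,2,3}`, and at least one of these six inequalities strict. -/
theorem no_tight_three_disk_configuration :
    ¬ ∃ (p : Fin 4 → EuclideanSpace ℝ (Fin 2)) (r : ℝ), 0 < r ∧
      (∀ i j : Fin 4, i ≠ 0 → j ≠ 0 → i ≠ j → 2 * r ≤ ‖p i - p j‖) ∧
      (∀ i : Fin 4, i ≠ 0 → ‖p i - p 0‖ ≤ (2 / Real.sqrt 3) * r) ∧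
      ((∃ i j : Fin 4, i ≠ 0 ∧ j ≠ 0 ∧ i ≠ j ∧ 2 * r < ‖p i - p j‖) ∨
        (∃ i : Fin 4, i ≠ 0 ∧ ‖p i - p 0‖ < (2 / Real.sqrt 3) * r)) := by
  rintro ⟨p, r, hr, hfar, hnear, hstrict⟩
  obtain ⟨a, ha⟩ : ∃ a, a = p 1 - p 0 := ⟨_, rfl⟩
  obtain ⟨b, hb⟩ : ∃ b, b = p 2 - p 0 := ⟨_, rfl⟩
  obtain ⟨c, hc⟩ : ∃ c, c = p 3 - p 0 := ⟨_, rfl⟩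
  have e12 : p 1 - p 2 = a - b := by rw [ha, hb, sub_sub_sub_cancel_right]
  have e23 : p 2 - p 3 = b - c := by rw [hb, hc, sub_sub_sub_cancel_right]
  have e13 : p 1 - p 3 = a - c := by rw [ha, hc, sub_sub_sub_cancel_right]
  have d12 : 2 * r ≤ ‖a - b‖ := e12 ▸ hfar 1 2 (by decide) (by decide) (by decide)
  have d23 : 2 * r ≤ ‖b - c‖ := e23 ▸ hfar 2 3 (by decide) (by decide) (by decide)
  have d13 : 2 * r ≤ ‖a - c‖ := e13 ▸ hfar 1 3 (by decide) (by decide) (by decide)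
  have n1 : ‖a‖ ≤ 2 / Real.sqrt 3 * r := ha ▸ hnear 1 (by decide)
  have n2 : ‖b‖ ≤ 2 / Real.sqrt 3 * r := hb ▸ hnear 2 (by decide)
  have n3 : ‖c‖ ≤ 2 / Real.sqrt 3 * r := hc ▸ hnear 3 (by decide)
  have hs3 : Real.sqrt 3 > 0 := Real.sqrt_pos.2 (by norm_num)
  have hR : (2 / Real.sqrt 3 * r) ^ 2 = 4 / 3 * r ^ 2 := by
    have : Real.sqrt 3 ^ 2 = 3 := Real.sq_sqrt (by norm_num)
    field_simp
    nlinarith [this]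
  have hRpos : 0 < 2 / Real.sqrt 3 * r := by positivity
  have key := three_disk_key a b c
  have hrpos : (0:ℝ) ≤ 2 * r := by linarith
  have sq12 : (2*r)^2 ≤ ‖a - b‖^2 := pow_le_pow_left₀ hrpos d12 2
  have sq23 : (2*r)^2 ≤ ‖b - c‖^2 := pow_le_pow_left₀ hrpos d23 2
  have sq13 : (2*r)^2 ≤ ‖a - c‖^2 := pow_le_pow_left₀ hrpos d13 2
  have sqn1 : ‖a‖^2 ≤ 4/3 * r^2 := by rw [← hR]; exact pow_le_pow_left₀ (norm_nonneg a) n1 2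
  have sqn2 : ‖b‖^2 ≤ 4/3 * r^2 := by rw [← hR]; exact pow_le_pow_left₀ (norm_nonneg b) n2 2
  have sqn3 : ‖c‖^2 ≤ 4/3 * r^2 := by rw [← hR]; exact pow_le_pow_left₀ (norm_nonneg c) n3 2
  have hG : 0 ≤ ‖a + b + c‖^2 := by positivity
  have hsq : (2*r)^2 = 4*r^2 := by ring
  rw [hsq] at sq12 sq23 sq13
  have sq12' := sq12
  have sq23' := sq23
  have sq13' := sq13
  have hsumle : ‖a - b‖^2 + ‖b - c‖^2 + ‖a - c‖^2 ≤ 12*r^2 := by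
    linarith [key, sqn1, sqn2, sqn3, hG]
  have eq12 : ‖a - b‖ = 2 * r :=
    le_antisymm ((abs_le_of_sq_le_sq' (by nlinarith [hsumle, sq23', sq13']) hrpos).2) d12
  have eq23 : ‖b - c‖ = 2 * r :=
    le_antisymm ((abs_le_of_sq_le_sq' (by nlinarith [hsumle, sq12', sq13']) hrpos).2) d23
  have eq13 : ‖a - c‖ = 2 * r :=
    le_antisymm ((abs_le_of_sq_le_sq' (by nlinarith [hsumle, sq12', sq23']) hrpos).2) d13
  have hnormsum : 4*r^2 ≤ ‖a‖^2 + ‖b‖^2 + ‖c‖^2 := by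
    linarith [key, hG, sq12', sq23', sq13']
  have eqn1 : ‖a‖ = 2 / Real.sqrt 3 * r :=
    le_antisymm n1 ((abs_le_of_sq_le_sq' (by nlinarith [hnormsum, sqn2, sqn3, hR]) (norm_nonneg a)).2)
  have eqn2 : ‖b‖ = 2 / Real.sqrt 3 * r :=
    le_antisymm n2 ((abs_le_of_sq_le_sq' (by nlinarith [hnormsum, sqn1, sqn3, hR]) (norm_nonneg b)).2)
  have eqn3 : ‖c‖ = 2 / Real.sqrt 3 * r :=
    le_antisymm n3 ((abs_le_of_sq_le_sq' (by nlinarith [hnormsum, sqn1, sqn2, hR]) (norm_nonneg c)).2)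
  rcases hstrict with ⟨i, j, hi, hj, hij, hlt⟩ | ⟨i, hi, hlt⟩
  · fin_cases i <;> fin_cases j <;> simp_all <;>
      first
        | linarith [eq12, eq13, eq23]
        | (rw [norm_sub_rev] at hlt; linarith [eq12, eq13, eq23])
  · fin_cases i <;> simp_all
end

section
/- If p₀ is a point in the plane and D₁, D₂, D₃ are three disks with pairwise disjoint interiors such that the distance from p₀ to the boundary circle of each disk is less than ε > 0, then at least one of the disks has radius at most ε/(2/√3 - 1). -/
open RealInnerProductSpace

private lemma aux_pair (ri rj ε : ℝ) (hε : 0 < ε)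
    (h : ri * rj < 3*ε*(ri+rj) + 3*ε^2) :
    ri ≤ ε / (2 / Real.sqrt 3 - 1) ∨ rj ≤ ε / (2 / Real.sqrt 3 - 1) := by
  set s := Real.sqrt 3 with hs
  have hs2 : s^2 = 3 := Real.sq_sqrt (by norm_num)
  have hs0 : 0 < s := Real.sqrt_pos.2 (by norm_num)
  have hs_lt : s < 2 := by nlinarith
  have hden : 0 < 2 / s - 1 := by
    rw [sub_pos, lt_div_iff₀ hs0]; linarith
  have heq : ε / (2 / s - 1) = (2*s+3)*ε := by
    rw [div_eq_iff (ne_of_gt hden)]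
    field_simp
    nlinarith [hs2]
  by_contra hc
  push_neg at hc
  obtain ⟨h1, h2⟩ := hc
  rw [heq] at h1 h2
  nlinarith [mul_pos (sub_pos.2 h1) (sub_pos.2 h2), mul_pos hs0 hε, hs2,
    mul_pos (mul_pos hs0 hε) hε, mul_pos (mul_pos hs0 hε) (sub_pos.2 h1),
    mul_pos (mul_pos hs0 hε) (sub_pos.2 h2)]

private lemma aux_main (p₀ pi pj : EuclideanSpace ℝ (Fin 2)) (ri rj ε : ℝ)
    (hε : 0 < ε) (hri : 0 < ri) (hrj : 0 < rj)
    (hdi : 0 < ‖p₀ - pi‖) (hdj : 0 < ‖p₀ - pj‖)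
    (hdisj : ri + rj ≤ ‖pi - pj‖)
    (hni : |‖p₀ - pi‖ - ri| < ε) (hnj : |‖p₀ - pj‖ - rj| < ε)
    (hinner : -(1/2) ≤ (inner ℝ ((‖p₀-pi‖)⁻¹ • (p₀-pi)) ((‖p₀-pj‖)⁻¹ • (p₀-pj)) : ℝ)) :
    ri ≤ ε / (2 / Real.sqrt 3 - 1) ∨ rj ≤ ε / (2 / Real.sqrt 3 - 1) := by
  apply aux_pair _ _ _ hε
  set di := ‖p₀ - pi‖ with hdi'
  set dj := ‖p₀ - pj‖ with hdj'
  rw [real_inner_smul_left, real_inner_smul_right] at hinner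
  have hinner' : -(di*dj/2) ≤ (inner ℝ (p₀-pi) (p₀-pj) : ℝ) := by
    have key := mul_le_mul_of_nonneg_left hinner (le_of_lt (mul_pos hdi hdj))
    have hh : di*dj*(di⁻¹*(dj⁻¹*(inner ℝ (p₀-pi) (p₀-pj) : ℝ))) = (inner ℝ (p₀-pi) (p₀-pj) : ℝ) := by
      field_simp
    rw [hh] at key
    linarith
  have hdist : ‖pi - pj‖^2 = di^2 + dj^2 - 2*(inner ℝ (p₀-pi) (p₀-pj) : ℝ) := by
    have hv : pi - pj = (p₀ - pj) - (p₀ - pi) := by abel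
    rw [hv, norm_sub_sq_real, real_inner_comm]
    rw [← hdi', ← hdj']
    ring
  have hsq : (ri+rj)^2 ≤ ‖pi-pj‖^2 := by
    have := pow_le_pow_left₀ (by positivity) hdisj 2
    exact this
  have h1 : di < ri + ε := by
    rcases abs_sub_lt_iff.1 hni with ⟨a, b⟩; linarith
  have h2 : dj < rj + ε := by
    rcases abs_sub_lt_iff.1 hnj with ⟨a, b⟩; linarith
  have hdd : di*dj < (ri+ε)*(rj+ε) :=
    mul_lt_mul'' h1 h2 hdi.le hdj.le
  nlinarith [hsq, hdist, hinner', hdd, sq_nonneg di, sq_nonneg dj, hdi.le, hdj.le]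

/-- If `p₀` is a point in the plane and three disks with pairwise disjoint
interiors all have boundary circles within distance `ε > 0` of `p₀`, then at least one
of the disks has radius at most `ε / (2/√3 - 1)`. -/
theorem small_disk_of_three_near_point
    (p₀ : EuclideanSpace ℝ (Fin 2)) (p : Fin 3 → EuclideanSpace ℝ (Fin 2))
    (r : Fin 3 → ℝ) (ε : ℝ) (hε : 0 < ε)
    (hr : ∀ i, 0 < r i)
    (hdisj : ∀ i j, i ≠ j → r i + r j ≤ ‖p i - p j‖)
    (hnear : ∀ i, |‖p₀ - p i‖ - r i| < ε) :
    ∃ i, r i ≤ ε / (2 / Real.sqrt 3 - 1) := by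
  have hs2 : (Real.sqrt 3)^2 = 3 := Real.sq_sqrt (by norm_num)
  have hs0 : 0 < Real.sqrt 3 := Real.sqrt_pos.2 (by norm_num)
  have hs_lt : Real.sqrt 3 < 2 := by nlinarith
  have hden : 0 < 2 / Real.sqrt 3 - 1 := by
    rw [sub_pos, lt_div_iff₀ hs0]; linarith
  have hden1 : 2 / Real.sqrt 3 - 1 ≤ 1 := by
    rw [sub_le_iff_le_add, div_le_iff₀ hs0]; nlinarith
  have hbig : ε ≤ ε / (2 / Real.sqrt 3 - 1) := by
    rw [le_div_iff₀ hden]; nlinarith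
  by_cases h0 : ∃ i, ‖p₀ - p i‖ = 0
  · obtain ⟨i, hi⟩ := h0
    refine ⟨i, ?_⟩
    have hni := hnear i
    rw [hi] at hni
    rw [abs_sub_lt_iff] at hni
    linarith [hni.2, hbig]
  · push_neg at h0
    have hd : ∀ i, 0 < ‖p₀ - p i‖ :=
      fun i => lt_of_le_of_ne (norm_nonneg _) (Ne.symm (h0 i))
    set u : Fin 3 → EuclideanSpace ℝ (Fin 2) :=
      fun i => (‖p₀ - p i‖)⁻¹ • (p₀ - p i) with hu'
    have hu : ∀ i, ‖u i‖ = 1 := by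
      intro i
      rw [hu']
      simp [norm_smul, abs_of_pos (inv_pos.2 (hd i)),
        inv_mul_cancel₀ (ne_of_gt (hd i))]
    have hexp : ‖u 0 + u 1 + u 2‖^2 =
        3 + 2*((inner ℝ (u 0) (u 1) : ℝ) + (inner ℝ (u 0) (u 2) : ℝ) + (inner ℝ (u 1) (u 2) : ℝ)) := by
      rw [norm_add_sq_real, norm_add_sq_real, inner_add_left, hu 0, hu 1, hu 2]
      ring
    have hpos : 0 ≤ ‖u 0 + u 1 + u 2‖^2 := sq_nonneg _
    have hcase : -(1/2) ≤ (inner ℝ (u 0) (u 1) : ℝ) ∨ -(1/2) ≤ (inner ℝ (u 0) (u 2) : ℝ) ∨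
        -(1/2) ≤ (inner ℝ (u 1) (u 2) : ℝ) := by
      by_contra hc
      push_neg at hc
      obtain ⟨a, b, c⟩ := hc
      rw [hexp] at hpos
      linarith
    rcases hcase with h | h | h
    · rcases aux_main p₀ (p 0) (p 1) (r 0) (r 1) ε hε (hr 0) (hr 1) (hd 0) (hd 1)
        (hdisj 0 1 (by decide)) (hnear 0) (hnear 1) h with h' | h'
      · exact ⟨0, h'⟩
      · exact ⟨1, h'⟩
    · rcases aux_main p₀ (p 0) (p 2) (r 0) (r 2) ε hε (hr 0) (hr 2) (hd 0) (hd 2)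
        (hdisj 0 2 (by decide)) (hnear 0) (hnear 2) h with h' | h'
      · exact ⟨0, h'⟩
      · exact ⟨2, h'⟩
    · rcases aux_main p₀ (p 1) (p 2) (r 1) (r 2) ε hε (hr 1) (hr 2) (hd 1) (hd 2)
        (hdisj 1 2 (by decide)) (hnear 1) (hnear 2) h with h' | h'
      · exact ⟨1, h'⟩
      · exact ⟨2, h'⟩
end

section
/- Let p₀, p₁, …, pₖ be points in ℝ² with associated weights ω₁, …, ωₖ (one per edge (0,i)) satisfying the planar equilibrium condition ∑ᵢ ωᵢ(p₀ - pᵢ) = 0 and the length condition ∑ᵢ ωᵢ‖p₀ - pᵢ‖ = 0. Suppose all ωᵢ ≠ 0, all pᵢ ≠ p₀, and there exists a unit vector u and angle θ with 0 < θ < π/2 such that every i with ωᵢ < 0 has (pᵢ - p₀)·u > cos(θ)·‖pᵢ - p₀‖ and every i with ωᵢ > 0 has (pᵢ - p₀)·u < cos(θ)·‖pᵢ - p₀‖, and at least one ωᵢ is negative. Then a contradiction follows; i.e., no such configuration exists. -/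
open scoped RealInnerProductSpace

/-- The equilibrium condition `∑ᵢ ωᵢ(p₀ - pᵢ) = 0` together with the
length condition `∑ᵢ ωᵢ‖p₀ - pᵢ‖ = 0` is impossible when all the negatively weighted
directions lie strictly inside a cone of half-angle `θ < π/2` around a unit vector `u`
and all the positively weighted directions lie strictly outside it, with at least one
negative weight. -/
theorem no_two_sign_change_equilibrium
    {k : ℕ} (p₀ : EuclideanSpace ℝ (Fin 2)) (p : Fin k → EuclideanSpace ℝ (Fin 2))
    (ω : Fin k → ℝ)
    (heq : ∑ i, ω i • (p₀ - p i) = 0)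
    (hlen : ∑ i, ω i * ‖p₀ - p i‖ = 0)
    (hω : ∀ i, ω i ≠ 0) (hp : ∀ i, p i ≠ p₀)
    (u : EuclideanSpace ℝ (Fin 2)) (hu : ‖u‖ = 1)
    (θ : ℝ) (hθ₀ : 0 < θ) (hθ₁ : θ < Real.pi / 2)
    (hneg : ∀ i, ω i < 0 → Real.cos θ * ‖p i - p₀‖ < ⟪p i - p₀, u⟫)
    (hpos : ∀ i, 0 < ω i → ⟪p i - p₀, u⟫ < Real.cos θ * ‖p i - p₀‖)
    (hex : ∃ i, ω i < 0) :
    False := by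
  obtain ⟨i₀, hi₀⟩ := hex
  -- inner product of equilibrium with u
  have h1 : ∑ i, ω i * ⟪p₀ - p i, u⟫ = 0 := by
    have := congrArg (fun v => ⟪v, u⟫) heq
    simpa [inner_smul_left, sum_inner] using this
  have h2 : ∑ i, ω i * (⟪p i - p₀, u⟫ - Real.cos θ * ‖p i - p₀‖) = 0 := by
    have h3 : ∑ i, ω i * ⟪p i - p₀, u⟫ = 0 := by
      have : ∑ i, ω i * ⟪p i - p₀, u⟫ = -∑ i, ω i * ⟪p₀ - p i, u⟫ := by
        rw [← Finset.sum_neg_distrib]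
        refine Finset.sum_congr rfl fun i _ => ?_
        have : (p i - p₀ : EuclideanSpace ℝ (Fin 2)) = -(p₀ - p i) := by abel
        rw [this, inner_neg_left]; ring
      rw [this, h1, neg_zero]
    have h4 : ∑ i, ω i * (Real.cos θ * ‖p i - p₀‖) = 0 := by
      have : ∀ i : Fin k, ω i * (Real.cos θ * ‖p i - p₀‖)
          = Real.cos θ * (ω i * ‖p₀ - p i‖) := by
        intro i; rw [norm_sub_rev]; ring
      rw [Finset.sum_congr rfl fun i _ => this i, ← Finset.mul_sum, hlen, mul_zero]
    simp only [mul_sub, Finset.sum_sub_distrib, h3, h4, sub_zero]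
  have hterm : ∀ i : Fin k, ω i * (⟪p i - p₀, u⟫ - Real.cos θ * ‖p i - p₀‖) ≤ 0 := by
    intro i
    rcases lt_or_gt_of_ne (hω i) with h | h
    · have := hneg i h
      exact mul_nonpos_of_nonpos_of_nonneg h.le (by linarith)
    · have := hpos i h
      exact mul_nonpos_of_nonneg_of_nonpos h.le (by linarith)
  have hstrict : ω i₀ * (⟪p i₀ - p₀, u⟫ - Real.cos θ * ‖p i₀ - p₀‖) < 0 := by
    have := hneg i₀ hi₀
    exact mul_neg_of_neg_of_pos hi₀ (by linarith)
  have hlt : ∑ i, ω i * (⟪p i - p₀, u⟫ - Real.cos θ * ‖p i - p₀‖)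
      < ∑ _i : Fin k, (0 : ℝ) :=
    Finset.sum_lt_sum (fun i _ => hterm i) ⟨i₀, Finset.mem_univ i₀, hstrict⟩
  simp only [Finset.sum_const_zero] at hlt
  linarith
end

section
/- Let G be a 3-connected graph on n vertices and (p, r) a disk packing whose contact graph contains G, such that at least 3 disks have radius ≥ 1. Then every radius satisfies rᵢ ≥ (7n)^{-n}. -/
/-- `G` is 3-connected: at least 4 vertices, and removing any at most 2 vertices
leaves a connected graph. -/
def ThreeConnected {V : Type*} [Fintype V] (G : SimpleGraph V) : Prop :=
  4 ≤ Fintype.card V ∧ ∀ s : Set V, s.ncard ≤ 2 → (G.induce sᶜ).Connected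

section Auxiliary

open RealInnerProductSpace

/-- Two disks with disjoint interiors, both of radius at least `7ρ`, both meeting the
ball of radius `ρ` around the origin of the `v`'s, cannot make an angle of at most
`2π/3` at that origin. -/
lemma RadiiAux.pair_contra {E : Type*} [NormedAddCommGroup E] [InnerProductSpace ℝ E]
    (v₁ v₂ : E) (R₁ R₂ ρ : ℝ) (hρ : 0 < ρ)
    (h1 : ‖v₁‖ ≤ R₁ + ρ) (h2 : ‖v₂‖ ≤ R₂ + ρ)
    (hR1 : 7 * ρ ≤ R₁) (hR2 : 7 * ρ ≤ R₂)
    (hinner : -(1/2) * (‖v₁‖ * ‖v₂‖) ≤ ⟪v₁, v₂⟫)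
    (hpack : R₁ + R₂ ≤ ‖v₁ - v₂‖) : False := by
  have hsq : ‖v₁ - v₂‖ ^ 2 = ‖v₁‖ ^ 2 - 2 * ⟪v₁, v₂⟫ + ‖v₂‖ ^ 2 := norm_sub_sq_real v₁ v₂
  have hd1 : (0:ℝ) ≤ ‖v₁‖ := norm_nonneg _
  have hd2 : (0:ℝ) ≤ ‖v₂‖ := norm_nonneg _
  have hle : (R₁ + R₂) ^ 2 ≤ ‖v₁ - v₂‖ ^ 2 := by
    apply pow_le_pow_left₀ (by nlinarith) hpack
  nlinarith [mul_nonneg (sub_nonneg.2 h1) (sub_nonneg.2 h2),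
    mul_nonneg (sub_nonneg.2 h1) hd2, mul_nonneg (sub_nonneg.2 h2) hd1,
    mul_nonneg (sub_nonneg.2 h1) (add_nonneg hd1 hd2),
    mul_nonneg (sub_nonneg.2 hR1) (le_trans (by linarith) hR2 : (0:ℝ) ≤ R₂),
    mul_nonneg (sub_nonneg.2 hR2) (le_trans (by linarith) hR1 : (0:ℝ) ≤ R₁),
    mul_nonneg (sub_nonneg.2 hR1) hρ.le, mul_nonneg (sub_nonneg.2 hR2) hρ.le]

/-- The three-disk lemma: among three pairwise non-overlapping disks each tangent to
(or meeting) a ball of radius `ρ` around `c`, one has radius less than `7ρ`. -/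
lemma RadiiAux.three_disk {E : Type*} [NormedAddCommGroup E] [InnerProductSpace ℝ E]
    (c q₁ q₂ q₃ : E) (R₁ R₂ R₃ ρ : ℝ) (hρ : 0 < ρ)
    (hb1 : ‖q₁ - c‖ ≤ R₁ + ρ) (hb2 : ‖q₂ - c‖ ≤ R₂ + ρ) (hb3 : ‖q₃ - c‖ ≤ R₃ + ρ)
    (hp12 : R₁ + R₂ ≤ ‖q₁ - q₂‖) (hp13 : R₁ + R₃ ≤ ‖q₁ - q₃‖)
    (hp23 : R₂ + R₃ ≤ ‖q₂ - q₃‖) :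
    R₁ < 7 * ρ ∨ R₂ < 7 * ρ ∨ R₃ < 7 * ρ := by
  by_contra hcon
  push_neg at hcon
  obtain ⟨hR1, hR2, hR3⟩ := hcon
  set v₁ := q₁ - c with hv1
  set v₂ := q₂ - c with hv2
  set v₃ := q₃ - c with hv3
  have hq12 : q₁ - q₂ = v₁ - v₂ := by rw [hv1, hv2]; abel
  have hq13 : q₁ - q₃ = v₁ - v₃ := by rw [hv1, hv3]; abel
  have hq23 : q₂ - q₃ = v₂ - v₃ := by rw [hv2, hv3]; abel
  rw [hq12] at hp12; rw [hq13] at hp13; rw [hq23] at hp23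
  -- all the vᵢ are nonzero
  have hd1 : 0 < ‖v₁‖ := by
    rcases eq_or_lt_of_le (norm_nonneg v₁) with h | h
    · exfalso
      have : ‖v₁ - v₂‖ = ‖v₂‖ := by
        rw [show v₁ = 0 from (norm_eq_zero.mp h.symm)]; simp
      rw [this] at hp12; linarith
    · exact h
  have hd2 : 0 < ‖v₂‖ := by
    rcases eq_or_lt_of_le (norm_nonneg v₂) with h | h
    · exfalso
      have : ‖v₂ - v₃‖ = ‖v₃‖ := by
        rw [show v₂ = 0 from (norm_eq_zero.mp h.symm)]; simp
      rw [this] at hp23; linarith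
    · exact h
  have hd3 : 0 < ‖v₃‖ := by
    rcases eq_or_lt_of_le (norm_nonneg v₃) with h | h
    · exfalso
      have : ‖v₁ - v₃‖ = ‖v₁‖ := by
        rw [show v₃ = 0 from (norm_eq_zero.mp h.symm)]; simp
      rw [this] at hp13; linarith
    · exact h
  -- unit vectors
  set u₁ := ‖v₁‖⁻¹ • v₁ with hu1
  set u₂ := ‖v₂‖⁻¹ • v₂ with hu2
  set u₃ := ‖v₃‖⁻¹ • v₃ with hu3
  have hn1 : ‖u₁‖ = 1 := by rw [hu1, norm_smul]; simp [abs_of_pos, hd1.ne', inv_mul_cancel₀]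
  have hn2 : ‖u₂‖ = 1 := by rw [hu2, norm_smul]; simp [abs_of_pos, hd2.ne', inv_mul_cancel₀]
  have hn3 : ‖u₃‖ = 1 := by rw [hu3, norm_smul]; simp [abs_of_pos, hd3.ne', inv_mul_cancel₀]
  -- some pair of unit vectors has inner product at least `-1/2`
  have hpair : -(1/2 : ℝ) ≤ ⟪u₁, u₂⟫ ∨ -(1/2 : ℝ) ≤ ⟪u₁, u₃⟫ ∨ -(1/2 : ℝ) ≤ ⟪u₂, u₃⟫ := by
    by_contra hc
    push_neg at hc
    obtain ⟨h12, h13, h23⟩ := hc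
    have e1 : ‖u₁ + u₂ + u₃‖ ^ 2 = ‖u₁ + u₂‖ ^ 2 + 2 * ⟪u₁ + u₂, u₃⟫ + ‖u₃‖ ^ 2 :=
      norm_add_sq_real _ _
    have e2 : ‖u₁ + u₂‖ ^ 2 = ‖u₁‖ ^ 2 + 2 * ⟪u₁, u₂⟫ + ‖u₂‖ ^ 2 := norm_add_sq_real _ _
    have e3 : ⟪u₁ + u₂, u₃⟫ = ⟪u₁, u₃⟫ + ⟪u₂, u₃⟫ := inner_add_left _ _ _
    have hnn : (0:ℝ) ≤ ‖u₁ + u₂ + u₃‖ ^ 2 := sq_nonneg _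
    rw [e1, e2, e3, hn1, hn2, hn3] at hnn
    linarith
  -- convert to an inner product bound on the `v`'s and conclude
  have key : ∀ (a b : E) (Ra Rb : ℝ), 0 < ‖a‖ → 0 < ‖b‖ →
      -(1/2 : ℝ) ≤ ⟪‖a‖⁻¹ • a, ‖b‖⁻¹ • b⟫ → ‖a‖ ≤ Ra + ρ → ‖b‖ ≤ Rb + ρ →
      7 * ρ ≤ Ra → 7 * ρ ≤ Rb → Ra + Rb ≤ ‖a - b‖ → False := by
    intro a b Ra Rb ha hb hi hba hbb hRa hRb hpk
    have : ⟪‖a‖⁻¹ • a, ‖b‖⁻¹ • b⟫ = ‖a‖⁻¹ * (‖b‖⁻¹ * ⟪a, b⟫) := by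
      rw [real_inner_smul_left, real_inner_smul_right]
    rw [this] at hi
    have hi' : -(1/2 : ℝ) * (‖a‖ * ‖b‖) ≤ ⟪a, b⟫ := by
      have := mul_le_mul_of_nonneg_left hi (mul_pos ha hb).le
      calc -(1/2 : ℝ) * (‖a‖ * ‖b‖) = ‖a‖ * ‖b‖ * -(1/2 : ℝ) := by ring
        _ ≤ ‖a‖ * ‖b‖ * (‖a‖⁻¹ * (‖b‖⁻¹ * ⟪a, b⟫)) := this
        _ = ⟪a, b⟫ := by field_simp
    exact RadiiAux.pair_contra a b Ra Rb ρ hρ hba hbb hRa hRb hi' hpk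
  rcases hpair with h | h | h
  · exact key v₁ v₂ R₁ R₂ hd1 hd2 h hb1 hb2 hR1 hR2 hp12
  · exact key v₁ v₃ R₁ R₃ hd1 hd3 h hb1 hb3 hR1 hR3 hp13
  · exact key v₂ v₃ R₂ R₃ hd2 hd3 h hb2 hb3 hR2 hR3 hp23

/-- Any walk from a vertex satisfying `P` to one not satisfying `P` crosses the boundary. -/
lemma RadiiAux.walk_crossing {W : Type*} {H : SimpleGraph W} {P : W → Prop} :
    ∀ {u w : W}, H.Walk u w → P u → ¬P w → ∃ x y, H.Adj x y ∧ P x ∧ ¬P y := by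
  intro u w walk
  induction walk with
  | nil => intro h h'; exact absurd h h'
  | @cons a b c h q ih =>
    intro hu hw
    by_cases hb : P b
    · exact ih hb hw
    · exact ⟨a, b, h, hu, hb⟩

/-- A nonempty set of vertices of a 3-connected graph whose complement has at least 3
vertices has at least 3 distinct outside neighbors. -/
lemma RadiiAux.exists_three_neighbors {n : ℕ} (G : SimpleGraph (Fin n))
    (h3 : ThreeConnected G) (S : Finset (Fin n)) (hne : S.Nonempty)
    (hcard : S.card + 3 ≤ n) :
    ∃ a b c : Fin n, a ≠ b ∧ a ≠ c ∧ b ≠ c ∧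
      (a ∉ S ∧ ∃ s ∈ S, G.Adj a s) ∧ (b ∉ S ∧ ∃ s ∈ S, G.Adj b s) ∧
      (c ∉ S ∧ ∃ s ∈ S, G.Adj c s) := by
  classical
  set N : Finset (Fin n) := Finset.univ.filter (fun v => v ∉ S ∧ ∃ s ∈ S, G.Adj v s) with hN
  have hmemN : ∀ v, v ∈ N ↔ (v ∉ S ∧ ∃ s ∈ S, G.Adj v s) := by
    intro v; simp [hN]
  have hNcard : 3 ≤ N.card := by
    by_contra hc
    push_neg at hc
    have hle : (↑N : Set (Fin n)).ncard ≤ 2 := by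
      rw [Set.ncard_coe_finset]; omega
    have hconn := h3.2 (↑N) hle
    obtain ⟨u, hu⟩ := hne
    have huN : u ∉ N := fun h => ((hmemN u).1 h).1 hu
    have hw : ((S ∪ N)ᶜ : Finset (Fin n)).Nonempty := by
      rw [← Finset.card_pos, Finset.card_compl]
      have : (S ∪ N).card ≤ S.card + N.card := Finset.card_union_le S N
      simp only [Fintype.card_fin]
      omega
    obtain ⟨w, hwmem⟩ := hw
    rw [Finset.mem_compl, Finset.mem_union] at hwmem
    push_neg at hwmem
    obtain ⟨hwS, hwN⟩ := hwmem
    have huc : u ∈ (↑N : Set (Fin n))ᶜ := by simp [huN]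
    have hwc : w ∈ (↑N : Set (Fin n))ᶜ := by simp [hwN]
    obtain ⟨walk⟩ := hconn.preconnected ⟨u, huc⟩ ⟨w, hwc⟩
    obtain ⟨x, y, hxy, hxS, hyS⟩ :=
      RadiiAux.walk_crossing
        (P := fun z : ((↑N : Set (Fin n))ᶜ : Set (Fin n)) => (z : Fin n) ∈ S)
        walk hu hwS
    have hadj : G.Adj (x : Fin n) (y : Fin n) := hxy
    have : (y : Fin n) ∈ N := (hmemN _).2 ⟨hyS, ⟨x, hxS, hadj.symm⟩⟩
    exact y.2 (Finset.mem_coe.mpr this)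
  obtain ⟨a, ha⟩ := Finset.card_pos.mp (by omega : 0 < N.card)
  have h2 : 0 < (N.erase a).card := by
    have := Finset.card_erase_of_mem ha; omega
  obtain ⟨b, hb⟩ := Finset.card_pos.mp h2
  have h3' : 0 < ((N.erase a).erase b).card := by
    have := Finset.card_erase_of_mem ha
    have := Finset.card_erase_of_mem hb; omega
  obtain ⟨c, hc⟩ := Finset.card_pos.mp h3'
  have hbN := Finset.mem_of_mem_erase hb
  have hcN := Finset.mem_of_mem_erase (Finset.mem_of_mem_erase hc)
  refine ⟨a, b, c, ?_, ?_, ?_, (hmemN a).1 ha, (hmemN b).1 hbN, (hmemN c).1 hcN⟩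
  · exact fun h => (Finset.ne_of_mem_erase hb) h.symm
  · exact fun h => (Finset.ne_of_mem_erase (Finset.mem_of_mem_erase hc)) h.symm
  · exact fun h => (Finset.ne_of_mem_erase hc) h.symm

end Auxiliary

/-- If `G` is a 3-connected graph on `n` vertices contained in the
contact graph of a packing of `n` disks, and at least 3 disks have radius `≥ 1`,
then every radius is at least `(7n)⁻ⁿ`. -/
theorem radii_bounded_below
    {n : ℕ} (G : SimpleGraph (Fin n)) (h3 : ThreeConnected G)
    (p : Fin n → EuclideanSpace ℝ (Fin 2)) (r : Fin n → ℝ)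
    (hr : ∀ i, 0 < r i)
    (hpack : ∀ i j, i ≠ j → r i + r j ≤ ‖p i - p j‖)
    (hcontact : ∀ i j, G.Adj i j → ‖p i - p j‖ = r i + r j)
    (hbig : ∃ s : Finset (Fin n), 3 ≤ s.card ∧ ∀ i ∈ s, 1 ≤ r i) :
    ∀ i, ((7 * n : ℝ) ^ n)⁻¹ ≤ r i := by
  classical
  intro i
  by_contra hlt
  push_neg at hlt
  have hn4 : 4 ≤ n := by simpa using h3.1
  -- grow a cluster of small disks
  have key : ∀ k, k + 3 ≤ n → ∃ S : Finset (Fin n), S.card = k + 1 ∧ i ∈ S ∧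
      ∀ j ∈ S, ‖p j - p i‖ + r j ≤ 15 ^ k * r i := by
    intro k
    induction k with
    | zero =>
      intro _
      refine ⟨{i}, by simp, by simp, ?_⟩
      intro j hj
      rw [Finset.mem_singleton] at hj
      subst hj
      simp
    | succ k ih =>
      intro hk
      obtain ⟨S, hScard, hiS, hball⟩ := ih (by omega)
      set ρ : ℝ := 15 ^ k * r i with hρdef
      have hρpos : 0 < ρ := mul_pos (pow_pos (by norm_num) k) (hr i)
      obtain ⟨a, b, c, hab, hac, hbc, ⟨haS, hanb⟩, ⟨hbS, hbnb⟩, ⟨hcS, hcnb⟩⟩ :=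
        RadiiAux.exists_three_neighbors G h3 S ⟨i, hiS⟩ (by omega)
      -- each neighbor's center is within `r + ρ` of the cluster center
      have hnb : ∀ w : Fin n, (∃ s ∈ S, G.Adj w s) → ‖p w - p i‖ ≤ r w + ρ := by
        intro w ⟨s, hsS, hadj⟩
        have h1 : ‖p w - p i‖ ≤ ‖p w - p s‖ + ‖p s - p i‖ := norm_sub_le_norm_sub_add_norm_sub _ _ _
        have h2 : ‖p w - p s‖ = r w + r s := hcontact w s hadj
        have h3' := hball s hsS
        linarith [h1, h2.le, h3']
      have hdisk := RadiiAux.three_disk (p i) (p a) (p b) (p c) (r a) (r b) (r c) ρ hρpos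
        (hnb a hanb) (hnb b hbnb) (hnb c hcnb)
        (hpack a b hab) (hpack a c hac) (hpack b c hbc)
      -- whichever neighbor is small, add it to the cluster
      have build : ∀ w : Fin n, w ∉ S → r w < 7 * ρ → (∃ s ∈ S, G.Adj w s) →
          ∃ S' : Finset (Fin n), S'.card = k + 1 + 1 ∧ i ∈ S' ∧
            ∀ j ∈ S', ‖p j - p i‖ + r j ≤ 15 ^ (k + 1) * r i := by
        intro w hwS hwr hwnb
        refine ⟨insert w S, ?_, Finset.mem_insert_of_mem hiS, ?_⟩
        · rw [Finset.card_insert_of_notMem hwS, hScard]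
        · intro j hj
          have h15 : (15 : ℝ) ^ (k + 1) * r i = 15 * ρ := by
            rw [hρdef]; ring
          rcases Finset.mem_insert.mp hj with h | h
          · subst h
            have := hnb j hwnb
            rw [h15]
            linarith
          · have := hball j h
            rw [h15]
            linarith
      rcases hdisk with h | h | h
      · exact build a haS h hanb
      · exact build b hbS h hbnb
      · exact build c hcS h hcnb
  -- the final cluster has `n - 2` vertices, all of radius `< 1`
  obtain ⟨S, hScard, _, hball⟩ := key (n - 3) (by omega)
  have hsmall : ∀ j ∈ S, r j < 1 := by
    intro j hj
    have h1 : r j ≤ 15 ^ (n - 3) * r i := by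
      have := hball j hj
      have := norm_nonneg (p j - p i)
      linarith
    have h2 : (15 : ℝ) ^ (n - 3) * r i < 15 ^ (n - 3) * ((7 * n : ℝ) ^ n)⁻¹ :=
      mul_lt_mul_of_pos_left hlt (pow_pos (by norm_num) _)
    have hn : (4 : ℝ) ≤ (n : ℝ) := by exact_mod_cast hn4
    have h3' : (15 : ℝ) ^ (n - 3) ≤ (7 * n : ℝ) ^ n :=
      le_trans (pow_le_pow_left₀ (by norm_num) (by linarith) _)
        (pow_le_pow_right₀ (by linarith) (by omega))
    have h4 : (0 : ℝ) < (7 * n : ℝ) ^ n := pow_pos (by linarith) _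
    have h5 : (15 : ℝ) ^ (n - 3) * ((7 * n : ℝ) ^ n)⁻¹ ≤ 1 := by
      calc (15 : ℝ) ^ (n - 3) * ((7 * n : ℝ) ^ n)⁻¹
          ≤ (7 * n : ℝ) ^ n * ((7 * n : ℝ) ^ n)⁻¹ :=
            mul_le_mul_of_nonneg_right h3' (inv_nonneg.mpr h4.le)
        _ = 1 := mul_inv_cancel₀ h4.ne'
    linarith
  obtain ⟨t, ht3, htbig⟩ := hbig
  have hdisj : Disjoint S t := by
    rw [Finset.disjoint_left]
    intro j hjS hjt
    exact absurd (htbig j hjt) (not_le.mpr (hsmall j hjS))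
  have hcard : (S ∪ t).card = S.card + t.card := Finset.card_union_of_disjoint hdisj
  have hle : (S ∪ t).card ≤ n := by
    simpa using Finset.card_le_univ (S ∪ t)
  omega
end

section
/- Given three mutually externally tangent disks with positive radii, there is exactly one disk contained in the closed region between them (the tricusp) that is externally tangent to all three; equivalently, among the two Soddy circles, exactly one corresponds to a disk with disjoint interior from all three given disks and center inside the triangle of the three centers. -/
set_option maxHeartbeats 2000000

open Finset RealInnerProductSpace

/-- given three mutually externally tangent disks with positive radii,
there is exactly one disk externally tangent to all three whose center lies inside
the triangle of the three centers (the inner Soddy disk, filling the tricusp). -/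
theorem existsUnique_inner_soddy_disk
    (p : Fin 3 → EuclideanSpace ℝ (Fin 2)) (r : Fin 3 → ℝ)
    (hr : ∀ i, 0 < r i)
    (htang : ∀ i j, i ≠ j → ‖p i - p j‖ = r i + r j) :
    ∃! qρ : EuclideanSpace ℝ (Fin 2) × ℝ,
      0 < qρ.2 ∧ (∀ i, ‖qρ.1 - p i‖ = qρ.2 + r i) ∧
      qρ.1 ∈ interior (convexHull ℝ (Set.range p)) := by
  set a := r 0 with ha
  set b := r 1 with hb
  set c := r 2 with hc
  have ha0 : 0 < a := hr 0
  have hb0 : 0 < b := hr 1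
  have hc0 : 0 < c := hr 2
  have hs00 : 0 < a + b + c := by linarith
  have habc : 0 < a * b * c := by positivity
  -- affine independence of the three centers
  have hrange : Set.range p = {p 0, p 1, p 2} := by
    ext x
    constructor
    · rintro ⟨i, rfl⟩; fin_cases i <;> simp
    · rintro (rfl | rfl | rfl) <;> exact ⟨_, rfl⟩
  have hInd : AffineIndependent ℝ p := by
    rw [affineIndependent_iff_not_collinear]
    intro hcol
    rw [hrange] at hcol
    have d01 : dist (p 0) (p 1) = a + b := by
      rw [dist_eq_norm, htang 0 1 (by decide), ← ha, ← hb]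
    have d12 : dist (p 1) (p 2) = b + c := by
      rw [dist_eq_norm, htang 1 2 (by decide), ← hb, ← hc]
    have d02 : dist (p 0) (p 2) = a + c := by
      rw [dist_eq_norm, htang 0 2 (by decide), ← ha, ← hc]
    have d10 : dist (p 1) (p 0) = a + b := by rw [dist_comm]; exact d01
    have d21 : dist (p 2) (p 1) = b + c := by rw [dist_comm]; exact d12
    have d20 : dist (p 2) (p 0) = a + c := by rw [dist_comm]; exact d02
    rcases hcol.wbtw_or_wbtw_or_wbtw with h | h | h
    · have := h.dist_add_dist; rw [d01, d12, d02] at this; linarith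
    · have := h.dist_add_dist; rw [d12, d20, d10] at this; linarith
    · have := h.dist_add_dist; rw [d20, d01, d21] at this; linarith
  have hTop : affineSpan ℝ (Set.range p) = ⊤ := by
    rw [hInd.affineSpan_eq_top_iff_card_eq_finrank_add_one]
    simp [finrank_euclideanSpace_fin]
  let B : AffineBasis (Fin 3) ℝ (EuclideanSpace ℝ (Fin 2)) := ⟨p, hInd, hTop⟩
  have hBcoe : ∀ i, B i = p i := fun _ => rfl
  have hIntChar :
      interior (convexHull ℝ (Set.range p)) = {x | ∀ i, 0 < B.coord i x} :=
    B.interior_convexHull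
  -- inner product data
  have hE1 : ⟪p 1 - p 0, p 1 - p 0⟫ = (a + b) ^ 2 := by
    rw [real_inner_self_eq_norm_sq, htang 1 0 (by decide), ← ha, ← hb]; ring
  have hE2 : ⟪p 2 - p 0, p 2 - p 0⟫ = (a + c) ^ 2 := by
    rw [real_inner_self_eq_norm_sq, htang 2 0 (by decide), ← ha, ← hc]; ring
  have hm : ⟪p 1 - p 0, p 2 - p 0⟫ = a ^ 2 + a * b + a * c - b * c := by
    have h12 : ⟪(p 1 - p 0) - (p 2 - p 0), (p 1 - p 0) - (p 2 - p 0)⟫ = (b + c) ^ 2 := by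
      rw [show (p 1 - p 0) - (p 2 - p 0) = p 1 - p 2 by abel,
        real_inner_self_eq_norm_sq, htang 1 2 (by decide), ← hb, ← hc]
    rw [real_inner_sub_sub_self] at h12
    rw [hE1, hE2] at h12
    linarith
  have hm2 : ⟪p 2 - p 0, p 1 - p 0⟫ = a ^ 2 + a * b + a * c - b * c := by
    rw [real_inner_comm]; exact hm
  have expand : ∀ σ τ : ℝ,
      ⟪σ • (p 1 - p 0) + τ • (p 2 - p 0), σ • (p 1 - p 0) + τ • (p 2 - p 0)⟫
        = σ ^ 2 * (a + b) ^ 2 + 2 * (σ * τ) * (a ^ 2 + a * b + a * c - b * c)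
          + τ ^ 2 * (a + c) ^ 2 := by
    intro σ τ
    simp only [inner_add_left, inner_add_right, real_inner_smul_left, real_inner_smul_right,
      hE1, hE2, hm, hm2]
    ring
  have normEq : ∀ (v : EuclideanSpace ℝ (Fin 2)) (y : ℝ), 0 ≤ y →
      ⟪v, v⟫ = y ^ 2 → ‖v‖ = y := by
    intro v y hy h
    have h2 : ‖v‖ ^ 2 = y ^ 2 := by rw [← real_inner_self_eq_norm_sq]; exact h
    have h3 := congrArg Real.sqrt h2
    rwa [Real.sqrt_sq (norm_nonneg v), Real.sqrt_sq hy] at h3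
  -- the scalar data of the inner Soddy circle
  set Δ := Real.sqrt (a * b * c * (a + b + c)) with hΔdef
  have hΔ : Δ ^ 2 = a * b * c * (a + b + c) := Real.sq_sqrt (by positivity)
  have hΔ0 : 0 < Δ := Real.sqrt_pos.mpr (by positivity)
  have hab : 0 < a * b := mul_pos ha0 hb0
  have hbc : 0 < b * c := mul_pos hb0 hc0
  have hca : 0 < c * a := mul_pos hc0 ha0
  have hD0 : 0 < a * b + b * c + c * a + 2 * Δ := by linarith
  have hNs0 : 0 < a * c * (a + b + c) + Δ * (a + c) := by
    have h1 : 0 < a * c * (a + b + c) := by positivity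
    have h2 : 0 < Δ * (a + c) := by positivity
    linarith
  have hNt0 : 0 < a * b * (a + b + c) + Δ * (a + b) := by
    have h1 : 0 < a * b * (a + b + c) := by positivity
    have h2 : 0 < Δ * (a + b) := by positivity
    linarith
  have hNa0 : 0 < b * c * (a + b + c) + Δ * (b + c) := by
    have h1 : 0 < b * c * (a + b + c) := by positivity
    have h2 : 0 < Δ * (b + c) := by positivity
    linarith
  have hQ0 : 0 < (a + b + c) * (a * b + b * c + c * a + 2 * Δ) := mul_pos hs00 hD0
  set ρ₀ := a * b * c / (a * b + b * c + c * a + 2 * Δ) with hρ₀def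
  set s₁ := (a * c * (a + b + c) + Δ * (a + c)) /
      ((a + b + c) * (a * b + b * c + c * a + 2 * Δ)) with hs₁def
  set t₁ := (a * b * (a + b + c) + Δ * (a + b)) /
      ((a + b + c) * (a * b + b * c + c * a + 2 * Δ)) with ht₁def
  have hρ' : ρ₀ * (a * b + b * c + c * a + 2 * Δ) = a * b * c := by
    rw [hρ₀def]; exact div_mul_cancel₀ _ hD0.ne'
  have hs' : s₁ * ((a + b + c) * (a * b + b * c + c * a + 2 * Δ))
      = a * c * (a + b + c) + Δ * (a + c) := by
    rw [hs₁def]; exact div_mul_cancel₀ _ hQ0.ne'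
  have ht' : t₁ * ((a + b + c) * (a * b + b * c + c * a + 2 * Δ))
      = a * b * (a + b + c) + Δ * (a + b) := by
    rw [ht₁def]; exact div_mul_cancel₀ _ hQ0.ne'
  have hρ₀pos : 0 < ρ₀ := by rw [hρ₀def]; exact div_pos habc hD0
  have hs₁pos : 0 < s₁ := by
    rw [hs₁def]; exact div_pos hNs0 hQ0
  have ht₁pos : 0 < t₁ := by
    rw [ht₁def]; exact div_pos hNt0 hQ0
  have hα₁ : 1 - s₁ - t₁ = (b * c * (a + b + c) + Δ * (b + c)) /
      ((a + b + c) * (a * b + b * c + c * a + 2 * Δ)) := by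
    rw [hs₁def, ht₁def]
    field_simp
    ring
  have hα₁pos : 0 < 1 - s₁ - t₁ := by
    rw [hα₁]; exact div_pos hNa0 hQ0
  -- the center
  have hw : ∑ i, (![1 - s₁ - t₁, s₁, t₁]) i = 1 := by
    rw [Fin.sum_univ_three]
    show (1 - s₁ - t₁) + s₁ + t₁ = 1
    ring
  set q₀ := Finset.univ.affineCombination ℝ p ![1 - s₁ - t₁, s₁, t₁] with hq₀def
  have hq₀lin : q₀ = ∑ i, (![1 - s₁ - t₁, s₁, t₁]) i • p i := by
    rw [hq₀def]; exact Finset.univ.affineCombination_eq_linear_combination p _ hw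
  have hv₀ : q₀ - p 0 = s₁ • (p 1 - p 0) + t₁ • (p 2 - p 0) := by
    rw [hq₀lin, Fin.sum_univ_three]
    show (1 - s₁ - t₁) • p 0 + s₁ • p 1 + t₁ • p 2 - p 0 = _
    module
  have hv₁ : q₀ - p 1 = (s₁ - 1) • (p 1 - p 0) + t₁ • (p 2 - p 0) := by
    rw [hq₀lin, Fin.sum_univ_three]
    show (1 - s₁ - t₁) • p 0 + s₁ • p 1 + t₁ • p 2 - p 1 = _
    module
  have hv₂ : q₀ - p 2 = s₁ • (p 1 - p 0) + (t₁ - 1) • (p 2 - p 0) := by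
    rw [hq₀lin, Fin.sum_univ_three]
    show (1 - s₁ - t₁) • p 0 + s₁ • p 1 + t₁ • p 2 - p 2 = _
    module
  have hQsq : ((a + b + c) * (a * b + b * c + c * a + 2 * Δ)) ^ 2 ≠ 0 :=
    pow_ne_zero 2 hQ0.ne'
  -- the three tangency conditions for the constructed disk
  have hd0 : ‖q₀ - p 0‖ = ρ₀ + a := by
    refine normEq _ _ (by linarith) ?_
    rw [hv₀, expand]
    refine mul_right_cancel₀ hQsq ?_
    linear_combination
      ((a + b) ^ 2 * (s₁ * ((a + b + c) * (a * b + b * c + c * a + 2 * Δ))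
          + (a * c * (a + b + c) + Δ * (a + c)))
        + 2 * (a ^ 2 + a * b + a * c - b * c)
          * (t₁ * ((a + b + c) * (a * b + b * c + c * a + 2 * Δ)))) * hs'
      + (2 * (a ^ 2 + a * b + a * c - b * c) * (a * c * (a + b + c) + Δ * (a + c))
        + (a + c) ^ 2 * (t₁ * ((a + b + c) * (a * b + b * c + c * a + 2 * Δ))
          + (a * b * (a + b + c) + Δ * (a + b)))) * ht'
      + (-((a + b + c) ^ 2 * (ρ₀ * (a * b + b * c + c * a + 2 * Δ)
          + 2 * a * (a * b + b * c + c * a + 2 * Δ) + a * b * c))) * hρ'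
      + (4 * a * b * c * (a + b + c)) * hΔ
  have hd1 : ‖q₀ - p 1‖ = ρ₀ + b := by
    refine normEq _ _ (by linarith) ?_
    rw [hv₁, expand]
    refine mul_right_cancel₀ hQsq ?_
    linear_combination
      ((a + b) ^ 2 * (s₁ * ((a + b + c) * (a * b + b * c + c * a + 2 * Δ))
          - (a + b + c) * (a * b + b * c + c * a + 2 * Δ)
          + (a * c * (a + b + c) + Δ * (a + c)
            - (a + b + c) * (a * b + b * c + c * a + 2 * Δ)))
        + 2 * (a ^ 2 + a * b + a * c - b * c)
          * (t₁ * ((a + b + c) * (a * b + b * c + c * a + 2 * Δ)))) * hs'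
      + (2 * (a ^ 2 + a * b + a * c - b * c)
          * (a * c * (a + b + c) + Δ * (a + c)
            - (a + b + c) * (a * b + b * c + c * a + 2 * Δ))
        + (a + c) ^ 2 * (t₁ * ((a + b + c) * (a * b + b * c + c * a + 2 * Δ))
          + (a * b * (a + b + c) + Δ * (a + b)))) * ht'
      + (-((a + b + c) ^ 2 * (ρ₀ * (a * b + b * c + c * a + 2 * Δ)
          + 2 * b * (a * b + b * c + c * a + 2 * Δ) + a * b * c))) * hρ'
      + (4 * a * b * c * (a + b + c)) * hΔ
  have hd2 : ‖q₀ - p 2‖ = ρ₀ + c := by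
    refine normEq _ _ (by linarith) ?_
    rw [hv₂, expand]
    refine mul_right_cancel₀ hQsq ?_
    linear_combination
      ((a + b) ^ 2 * (s₁ * ((a + b + c) * (a * b + b * c + c * a + 2 * Δ))
          + (a * c * (a + b + c) + Δ * (a + c)))
        + 2 * (a ^ 2 + a * b + a * c - b * c)
          * (t₁ * ((a + b + c) * (a * b + b * c + c * a + 2 * Δ))
            - (a + b + c) * (a * b + b * c + c * a + 2 * Δ))) * hs'
      + (2 * (a ^ 2 + a * b + a * c - b * c) * (a * c * (a + b + c) + Δ * (a + c))
        + (a + c) ^ 2 * (t₁ * ((a + b + c) * (a * b + b * c + c * a + 2 * Δ))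
          - (a + b + c) * (a * b + b * c + c * a + 2 * Δ)
          + (a * b * (a + b + c) + Δ * (a + b)
            - (a + b + c) * (a * b + b * c + c * a + 2 * Δ)))) * ht'
      + (-((a + b + c) ^ 2 * (ρ₀ * (a * b + b * c + c * a + 2 * Δ)
          + 2 * c * (a * b + b * c + c * a + 2 * Δ) + a * b * c))) * hρ'
      + (4 * a * b * c * (a + b + c)) * hΔ
  -- the center lies in the open triangle
  have hcoord : ∀ i, B.coord i q₀ = (![1 - s₁ - t₁, s₁, t₁]) i := by
    intro i
    rw [hq₀def]
    exact B.coord_apply_combination_of_mem (Finset.mem_univ i) hw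
  have hq₀int : q₀ ∈ interior (convexHull ℝ (Set.range p)) := by
    rw [hIntChar]
    intro i
    rw [hcoord i]
    fin_cases i
    · exact hα₁pos
    · exact hs₁pos
    · exact ht₁pos
  refine ⟨(q₀, ρ₀), ⟨hρ₀pos, ?_, hq₀int⟩, ?_⟩
  · intro i
    fin_cases i
    · exact hd0
    · exact hd1
    · exact hd2
  -- uniqueness
  rintro ⟨q, ρ⟩ ⟨hρpos, hdist, hint⟩
  dsimp only at hρpos hdist hint
  have hsum := B.sum_coord_apply_eq_one q
  rw [Fin.sum_univ_three] at hsum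
  set β := B.coord 1 q with hβdef
  set γ := B.coord 2 q with hγdef
  have hlin := B.linear_combination_coord_eq_self q
  rw [Fin.sum_univ_three] at hlin
  simp only [hBcoe] at hlin
  have hα0' : B.coord 0 q = 1 - β - γ := by linarith
  have hv : q - p 0 = β • (p 1 - p 0) + γ • (p 2 - p 0) := by
    rw [← hlin, hα0']
    module
  have hvv : ⟪q - p 0, q - p 0⟫ = (ρ + a) ^ 2 := by
    rw [real_inner_self_eq_norm_sq, hdist 0, ← ha]
  have hvv1 : ⟪q - p 1, q - p 1⟫ = (ρ + b) ^ 2 := by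
    rw [real_inner_self_eq_norm_sq, hdist 1, ← hb]
  have hvv2 : ⟪q - p 2, q - p 2⟫ = (ρ + c) ^ 2 := by
    rw [real_inner_self_eq_norm_sq, hdist 2, ← hc]
  have hX1 : ⟪q - p 0, p 1 - p 0⟫ = a * (a + b) + ρ * (a - b) := by
    have h := real_inner_sub_sub_self (q - p 0) (p 1 - p 0)
    rw [show (q - p 0) - (p 1 - p 0) = q - p 1 by abel, hvv1, hvv, hE1,
      real_inner_comm (p 1 - p 0) (q - p 0)] at h
    linear_combination h / 2 - real_inner_comm (q - p 0) (p 1 - p 0)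
  have hX2 : ⟪q - p 0, p 2 - p 0⟫ = a * (a + c) + ρ * (a - c) := by
    have h := real_inner_sub_sub_self (q - p 0) (p 2 - p 0)
    rw [show (q - p 0) - (p 2 - p 0) = q - p 2 by abel, hvv2, hvv, hE2,
      real_inner_comm (p 2 - p 0) (q - p 0)] at h
    linear_combination h / 2 - real_inner_comm (q - p 0) (p 2 - p 0)
  have hX1' : ⟪q - p 0, p 1 - p 0⟫
      = β * (a + b) ^ 2 + γ * (a ^ 2 + a * b + a * c - b * c) := by
    rw [hv]
    simp only [inner_add_left, real_inner_smul_left, hE1, hE2, hm, hm2]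
  have hX2' : ⟪q - p 0, p 2 - p 0⟫
      = β * (a ^ 2 + a * b + a * c - b * c) + γ * (a + c) ^ 2 := by
    rw [hv]
    simp only [inner_add_left, real_inner_smul_left, hE1, hE2, hm, hm2]
  have h1 : β * (a + b) ^ 2 + γ * (a ^ 2 + a * b + a * c - b * c)
      = a * (a + b) + ρ * (a - b) := by linear_combination hX1 - hX1'
  have h2 : β * (a ^ 2 + a * b + a * c - b * c) + γ * (a + c) ^ 2
      = a * (a + c) + ρ * (a - c) := by linear_combination hX2 - hX2'
  have h3 : β ^ 2 * (a + b) ^ 2 + 2 * (β * γ) * (a ^ 2 + a * b + a * c - b * c)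
      + γ ^ 2 * (a + c) ^ 2 = (ρ + a) ^ 2 := by
    rw [hv, expand] at hvv
    linear_combination hvv
  have hGs : 4 * a * b * c * (a + b + c) * β
      = 2 * a * b * c * (a + c) + 2 * ρ * (a ^ 2 * (c - b) + c ^ 2 * (a - b)) := by
    linear_combination ((a + c) ^ 2) * h1 - (a ^ 2 + a * b + a * c - b * c) * h2
  have hGt : 4 * a * b * c * (a + b + c) * γ
      = 2 * a * b * c * (a + b) + 2 * ρ * (a ^ 2 * (b - c) + b ^ 2 * (a - c)) := by
    linear_combination (-(a ^ 2 + a * b + a * c - b * c)) * h1 + ((a + b) ^ 2) * h2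
  have hkT : 16 * a * b * c * (a + b + c) *
      (((a * b + b * c + c * a) * ρ - a * b * c) ^ 2
        - 4 * a * b * c * (a + b + c) * ρ ^ 2) = 0 := by
    linear_combination (16 * a ^ 2 * b ^ 2 * c ^ 2 * (a + b + c) ^ 2) * h3
      - ((a + b) ^ 2 * (4 * a * b * c * (a + b + c) * β
            + (2 * a * b * c * (a + c) + 2 * ρ * (a ^ 2 * (c - b) + c ^ 2 * (a - b))))
        + 2 * (a ^ 2 + a * b + a * c - b * c)
          * (4 * a * b * c * (a + b + c) * γ)) * hGs
      - (2 * (a ^ 2 + a * b + a * c - b * c)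
          * (2 * a * b * c * (a + c) + 2 * ρ * (a ^ 2 * (c - b) + c ^ 2 * (a - b)))
        + (a + c) ^ 2 * (4 * a * b * c * (a + b + c) * γ
            + (2 * a * b * c * (a + b) + 2 * ρ * (a ^ 2 * (b - c) + b ^ 2 * (a - c))))) * hGt
  have h16 : (16 : ℝ) * a * b * c * (a + b + c) ≠ 0 := by
    have : (0:ℝ) < 16 * a * b * c * (a + b + c) := by positivity
    exact this.ne'
  have hT : ((a * b + b * c + c * a) * ρ - a * b * c) ^ 2
      = 4 * a * b * c * (a + b + c) * ρ ^ 2 := by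
    have h' := (mul_eq_zero.mp hkT).resolve_left h16
    linarith only [h']
  have hfac : (((a * b + b * c + c * a) * ρ - a * b * c) - 2 * Δ * ρ)
      * (((a * b + b * c + c * a) * ρ - a * b * c) + 2 * Δ * ρ) = 0 := by
    linear_combination hT - 4 * ρ ^ 2 * hΔ
  rcases mul_eq_zero.mp hfac with hcase | hcase
  · -- outer root: contradicts the center being inside the triangle
    exfalso
    have hρD2 : ρ * ((a * b + b * c + c * a) - 2 * Δ) = a * b * c := by
      linear_combination hcase
    have hP2 : 0 < (a * b + b * c + c * a) - 2 * Δ := by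
      nlinarith only [hρD2, hρpos, habc]
    have hposall : ∀ i, 0 < B.coord i q := by
      rw [hIntChar] at hint; exact hint
    have hβpos : 0 < β := hposall 1
    have hγpos : 0 < γ := hposall 2
    have hαpos : 0 < 1 - β - γ := by
      have := hposall 0; rw [hα0'] at this; exact this
    have h4abc : (4 : ℝ) * a * b * c ≠ 0 := by
      have : (0:ℝ) < 4 * a * b * c := by positivity
      exact this.ne'
    have hX1c : (a + b + c) * ((a * b + b * c + c * a) - 2 * Δ) * β
        = a * c * (a + b + c) - Δ * (a + c) := by
      refine mul_right_cancel₀ h4abc ?_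
      linear_combination ((a * b + b * c + c * a) - 2 * Δ) * hGs
        + 2 * (a ^ 2 * (c - b) + c ^ 2 * (a - b)) * hρD2
    have hX2c : (a + b + c) * ((a * b + b * c + c * a) - 2 * Δ) * γ
        = a * b * (a + b + c) - Δ * (a + b) := by
      refine mul_right_cancel₀ h4abc ?_
      linear_combination ((a * b + b * c + c * a) - 2 * Δ) * hGt
        + 2 * (a ^ 2 * (b - c) + b ^ 2 * (a - c)) * hρD2
    have hX3c : (a + b + c) * ((a * b + b * c + c * a) - 2 * Δ) * (1 - β - γ)
        = b * c * (a + b + c) - Δ * (b + c) := by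
      linear_combination (-1 : ℝ) * hX1c - hX2c
    have hX1p : 0 < a * c * (a + b + c) - Δ * (a + c) := by
      rw [← hX1c]; exact mul_pos (mul_pos hs00 hP2) hβpos
    have hX2p : 0 < a * b * (a + b + c) - Δ * (a + b) := by
      rw [← hX2c]; exact mul_pos (mul_pos hs00 hP2) hγpos
    have hX3p : 0 < b * c * (a + b + c) - Δ * (b + c) := by
      rw [← hX3c]; exact mul_pos (mul_pos hs00 hP2) hαpos
    have hprod1 := mul_pos hX1p hNs0
    have hprod2 := mul_pos hX2p hNt0
    have hprod3 := mul_pos hX3p hNa0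
    have e1 : (a * c * (a + b + c) - Δ * (a + c)) * (a * c * (a + b + c) + Δ * (a + c))
        = (a * c * (a + b + c)) * (a * c * (a + b + c) - b * (a + c) ^ 2) := by
      linear_combination (-(a + c) ^ 2) * hΔ
    have e2 : (a * b * (a + b + c) - Δ * (a + b)) * (a * b * (a + b + c) + Δ * (a + b))
        = (a * b * (a + b + c)) * (a * b * (a + b + c) - c * (a + b) ^ 2) := by
      linear_combination (-(a + b) ^ 2) * hΔ
    have e3 : (b * c * (a + b + c) - Δ * (b + c)) * (b * c * (a + b + c) + Δ * (b + c))
        = (b * c * (a + b + c)) * (b * c * (a + b + c) - a * (b + c) ^ 2) := by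
      linear_combination (-(b + c) ^ 2) * hΔ
    rw [e1] at hprod1
    rw [e2] at hprod2
    rw [e3] at hprod3
    have hacs : (0:ℝ) ≤ a * c * (a + b + c) := by positivity
    have habs : (0:ℝ) ≤ a * b * (a + b + c) := by positivity
    have hbcs : (0:ℝ) ≤ b * c * (a + b + c) := by positivity
    have k1 : 0 < a * c * (a + b + c) - b * (a + c) ^ 2 :=
      lt_of_mul_lt_mul_left (by simpa using hprod1) hacs
    have k2 : 0 < a * b * (a + b + c) - c * (a + b) ^ 2 :=
      lt_of_mul_lt_mul_left (by simpa using hprod2) habs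
    have k3 : 0 < b * c * (a + b + c) - a * (b + c) ^ 2 :=
      lt_of_mul_lt_mul_left (by simpa using hprod3) hbcs
    have hid : a * c * (a + b + c) + a * b * (a + b + c) + b * c * (a + b + c)
        + 3 * (a * b * c)
        = b * (a + c) ^ 2 + c * (a + b) ^ 2 + a * (b + c) ^ 2 := by ring
    linarith only [k1, k2, k3, hid, habc]
  · -- inner root: the disk coincides with the constructed one
    have hρD : ρ * (a * b + b * c + c * a + 2 * Δ) = a * b * c := by
      linear_combination hcase
    have hρeq : ρ = ρ₀ := by
      refine mul_right_cancel₀ hD0.ne' ?_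
      rw [hρD, hρ']
    have h4abcs : (4 : ℝ) * a * b * c * (a + b + c) ≠ 0 := by
      have : (0:ℝ) < 4 * a * b * c * (a + b + c) := by positivity
      exact this.ne'
    have hβeq : β = s₁ := by
      refine mul_right_cancel₀ hQ0.ne' ?_
      rw [hs']
      refine mul_right_cancel₀ h4abcs ?_
      linear_combination ((a + b + c) * (a * b + b * c + c * a + 2 * Δ)) * hGs
        + (2 * (a ^ 2 * (c - b) + c ^ 2 * (a - b)) * (a + b + c)) * hρD
    have hγeq : γ = t₁ := by
      refine mul_right_cancel₀ hQ0.ne' ?_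
      rw [ht']
      refine mul_right_cancel₀ h4abcs ?_
      linear_combination ((a + b + c) * (a * b + b * c + c * a + 2 * Δ)) * hGt
        + (2 * (a ^ 2 * (b - c) + b ^ 2 * (a - c)) * (a + b + c)) * hρD
    have hqeq : q = q₀ := by
      have hvv' : q - p 0 = q₀ - p 0 := by
        rw [hv, hv₀, hβeq, hγeq]
      exact sub_left_injective hvv'
    exact Prod.ext_iff.mpr ⟨hqeq, hρeq⟩
end
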